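/- For ρ > -1, Re(μ) > 0, the Riemann–Liouville fractional integral of order μ in Y with base point B applied to (Y−B)^ρ ₖH_n^ρ(X, w(Y−B)) equals (Y−B)^{ρ+μ} ₖH_n^{ρ+μ}(X, w(Y−B)) for Y > B. (Here the superscript of the Hermite–Konhauser polynomial shifts by μ.) -/

import Mathlib

/-! The kernel integral `∫_B^Y (Y-t)^(μ-1) (t-B)^a dt` is a scaled Beta integral, so `I^μ_{B+}`
sends the normalised power `(t-B)^a / Γ(a+1)` to `(Y-B)^(a+μ) / Γ(a+μ+1)` whenever `Re a > -1`.
Multiplied by `(t-B)^ρ`, the polynomial `ₖH_n^ρ(X, w(t-B))` is a finite combination of normalised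
powers with exponents `ρ + Υr` and coefficients independent of `ρ`; applying `I^μ_{B+}` termwise
therefore shifts `ρ` to `ρ + μ`. -/

open MeasureTheory

noncomputable def poch (a : ℂ) (k : ℕ) : ℂ := ∏ i ∈ Finset.range k, (a + i)

/-- The 2D Hermite–Konhauser polynomial `ₖH_n^ρ(X,Y)` with complex parameter `ρ`. -/
noncomputable def hermiteKonhauser (ρ : ℂ) (Υ n : ℕ) (X Y : ℂ) : ℂ :=
  ∑ s ∈ Finset.range (n / 2 + 1), ∑ r ∈ Finset.range (n - s + 1),
    ((-1) ^ s * poch (-(n : ℂ)) (2 * s) * poch (-(n : ℂ)) (s + r)) /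
      (poch (-(n : ℂ)) s * Complex.Gamma (ρ + 1 + (Υ : ℂ) * r) *
        (s.factorial : ℂ) * (r.factorial : ℂ)) *
      (2 * X) ^ (n - 2 * s) * Y ^ (Υ * r)

open Complex Finset

theorem integral_ofReal_sub_cpow_mul_ofReal_sub_cpow {μ a : ℂ} (hμ : 0 < μ.re) (ha : -1 < a.re)
    {B Y : ℝ} (hBY : B < Y) :
    ∫ t in B..Y, ((Y - t : ℝ) : ℂ) ^ (μ - 1) * ((t - B : ℝ) : ℂ) ^ a =
      ((Y - B : ℝ) : ℂ) ^ (a + μ) * (Gamma μ * Gamma (a + 1) / Gamma (a + μ + 1)) := by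
  have ha' : 0 < (a + 1).re := by rw [add_re, one_re]; linarith
  have hshift := intervalIntegral.integral_comp_add_right
    (fun t : ℝ => ((Y - t : ℝ) : ℂ) ^ (μ - 1) * ((t - B : ℝ) : ℂ) ^ a) B (a := 0) (b := Y - B)
  simp only [zero_add, sub_add_cancel, add_sub_cancel_right] at hshift
  rw [← hshift]
  calc ∫ x in (0 : ℝ)..Y - B, ((Y - (x + B) : ℝ) : ℂ) ^ (μ - 1) * (x : ℂ) ^ a
      = ∫ x in (0 : ℝ)..Y - B, (x : ℂ) ^ (a + 1 - 1) * (((Y - B : ℝ) : ℂ) - x) ^ (μ - 1) := by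
        refine intervalIntegral.integral_congr fun x _ => ?_
        simp only [add_sub_cancel_right, mul_comm]
        push_cast
        ring_nf
    _ = _ := by
        rw [betaIntegral_scaled _ _ (sub_pos.2 hBY), betaIntegral_eq_Gamma_mul_div _ _ ha' hμ]
        ring_nf

theorem intervalIntegrable_ofReal_sub_cpow_mul_ofReal_sub_cpow {μ a : ℂ} (hμ : 0 < μ.re)
    (ha : -1 < a.re) {B Y : ℝ} (hBY : B < Y) :
    IntervalIntegrable (fun t : ℝ => ((Y - t : ℝ) : ℂ) ^ (μ - 1) * ((t - B : ℝ) : ℂ) ^ a)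
      volume B Y := by
  -- a non-integrable function would have integral `0`, and the Beta value is not `0`
  refine intervalIntegral.intervalIntegrable_of_integral_ne_zero ?_
  have ha' : 0 < (a + 1).re := by rw [add_re, one_re]; linarith
  have hμa : 0 < (a + μ + 1).re := by rw [add_re, add_re, one_re]; linarith
  rw [integral_ofReal_sub_cpow_mul_ofReal_sub_cpow hμ ha hBY]
  refine mul_ne_zero ?_ (div_ne_zero (mul_ne_zero ?_ ?_) ?_)
  · exact cpow_ne_zero_iff.2 (Or.inl (ofReal_ne_zero.2 (sub_pos.2 hBY).ne'))
  all_goals exact Gamma_ne_zero_of_re_pos ‹_›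

noncomputable def riemannLiouvilleIntegral (μ : ℂ) (B : ℝ) (f : ℝ → ℂ) (Y : ℝ) : ℂ :=
  1 / Gamma μ * ∫ t in B..Y, ((Y - t : ℝ) : ℂ) ^ (μ - 1) * f t

section riemannLiouvilleIntegral

variable {μ : ℂ} {B Y : ℝ}

theorem riemannLiouvilleIntegral_congr_Ioc {f g : ℝ → ℂ} (hBY : B ≤ Y)
    (h : Set.EqOn f g (Set.Ioc B Y)) :
    riemannLiouvilleIntegral μ B f Y = riemannLiouvilleIntegral μ B g Y := by
  unfold riemannLiouvilleIntegral
  congr 1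
  refine intervalIntegral.integral_congr_ae (Filter.Eventually.of_forall fun t ht => ?_)
  rw [Set.uIoc_of_le hBY] at ht
  rw [h ht]

theorem riemannLiouvilleIntegral_const_mul (c : ℂ) (f : ℝ → ℂ) :
    riemannLiouvilleIntegral μ B (fun t => c * f t) Y = c * riemannLiouvilleIntegral μ B f Y := by
  simp only [riemannLiouvilleIntegral, mul_left_comm _ c, intervalIntegral.integral_const_mul]

theorem riemannLiouvilleIntegral_finsetSum {ι : Type*} (s : Finset ι) (f : ι → ℝ → ℂ)
    (hf : ∀ i ∈ s, IntervalIntegrable (fun t => ((Y - t : ℝ) : ℂ) ^ (μ - 1) * f i t) volume B Y) :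
    riemannLiouvilleIntegral μ B (fun t => ∑ i ∈ s, f i t) Y =
      ∑ i ∈ s, riemannLiouvilleIntegral μ B (f i) Y := by
  simp only [riemannLiouvilleIntegral, Finset.mul_sum]
  rw [intervalIntegral.integral_finsetSum hf, Finset.mul_sum]

theorem riemannLiouvilleIntegral_ofReal_sub_cpow_div_Gamma (hμ : 0 < μ.re) {a : ℂ}
    (ha : -1 < a.re) (hBY : B < Y) :
    riemannLiouvilleIntegral μ B (fun t => ((t - B : ℝ) : ℂ) ^ a / Gamma (a + 1)) Y =
      ((Y - B : ℝ) : ℂ) ^ (a + μ) / Gamma (a + μ + 1) := by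
  have hΓμ := Gamma_ne_zero_of_re_pos hμ
  have hΓa : Gamma (a + 1) ≠ 0 := Gamma_ne_zero_of_re_pos (by rw [add_re, one_re]; linarith)
  simp only [div_eq_mul_inv _ (Gamma (a + 1)), mul_comm _ (Gamma (a + 1))⁻¹,
    riemannLiouvilleIntegral_const_mul]
  rw [riemannLiouvilleIntegral, integral_ofReal_sub_cpow_mul_ofReal_sub_cpow hμ ha hBY]
  field_simp

theorem riemannLiouvilleIntegral_finsetSum_mul_ofReal_sub_cpow_div_Gamma (hμ : 0 < μ.re)
    (hBY : B < Y) {ι : Type*} (s : Finset ι) (c a : ι → ℂ) (ha : ∀ i ∈ s, -1 < (a i).re) :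
    riemannLiouvilleIntegral μ B
        (fun t => ∑ i ∈ s, c i * (((t - B : ℝ) : ℂ) ^ a i / Gamma (a i + 1))) Y =
      ∑ i ∈ s, c i * (((Y - B : ℝ) : ℂ) ^ (a i + μ) / Gamma (a i + μ + 1)) := by
  rw [riemannLiouvilleIntegral_finsetSum]
  · refine Finset.sum_congr rfl fun i hi => ?_
    rw [riemannLiouvilleIntegral_const_mul,
      riemannLiouvilleIntegral_ofReal_sub_cpow_div_Gamma hμ (ha i hi) hBY]
  · intro i hi
    convert (intervalIntegrable_ofReal_sub_cpow_mul_ofReal_sub_cpow hμ (ha i hi) hBY).const_mul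
      (c i / Gamma (a i + 1)) using 2 with t
    ring

end riemannLiouvilleIntegral

noncomputable def hermiteKonhauserCoeff (n s r : ℕ) : ℂ :=
  (-1) ^ s * poch (-(n : ℂ)) (2 * s) * poch (-(n : ℂ)) (s + r) /
    (poch (-(n : ℂ)) s * s.factorial * r.factorial)

theorem cpow_mul_hermiteKonhauser (ρ : ℂ) (Υ n : ℕ) (X w : ℂ) {z : ℂ} (hz : z ≠ 0) :
    z ^ ρ * hermiteKonhauser ρ Υ n X (w * z) =
      ∑ s ∈ range (n / 2 + 1), ∑ r ∈ range (n - s + 1),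
        hermiteKonhauserCoeff n s r * (2 * X) ^ (n - 2 * s) * w ^ (Υ * r) *
          (z ^ (ρ + Υ * r) / Gamma (ρ + Υ * r + 1)) := by
  simp only [hermiteKonhauser, hermiteKonhauserCoeff, Finset.mul_sum]
  refine Finset.sum_congr rfl fun s _ => Finset.sum_congr rfl fun r _ => ?_
  rw [cpow_add _ _ hz, ← Nat.cast_mul, cpow_natCast, add_right_comm ρ 1, mul_pow]
  ring

theorem riemannLiouville_integral_hermiteKonhauser_general (ρ : ℝ) (hρ : -1 < ρ) (μ : ℂ)
    (hμ : 0 < μ.re) (Υ n : ℕ) (X w : ℂ) (B Y : ℝ) (hY : B < Y) :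
    (1 / Complex.Gamma μ) *
        (∫ t in B..Y, ((Y - t : ℝ) : ℂ) ^ (μ - 1) *
          (((t - B : ℝ) : ℂ) ^ (ρ : ℂ) * hermiteKonhauser (ρ : ℂ) Υ n X (w * ((t : ℂ) - B)))) =
      ((Y - B : ℝ) : ℂ) ^ ((ρ : ℂ) + μ) *
        hermiteKonhauser ((ρ : ℂ) + μ) Υ n X (w * ((Y : ℂ) - B)) := by
  set S := (range (n / 2 + 1)).sigma fun s => range (n - s + 1)
  set c : (Σ _ : ℕ, ℕ) → ℂ := fun i =>
    hermiteKonhauserCoeff n i.1 i.2 * (2 * X) ^ (n - 2 * i.1) * w ^ (Υ * i.2)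
  have hexp : ∀ i ∈ S, -1 < ((ρ : ℂ) + Υ * i.2).re := fun i _ => by
    simp only [add_re, ofReal_re, mul_re, natCast_re, natCast_im, mul_zero, sub_zero]
    linarith [show (0 : ℝ) ≤ Υ * i.2 by positivity]
  have hYB : ((Y - B : ℝ) : ℂ) ≠ 0 := ofReal_ne_zero.2 (sub_pos.2 hY).ne'
  simp only [← ofReal_sub]
  change riemannLiouvilleIntegral μ B _ Y = _
  rw [riemannLiouvilleIntegral_congr_Ioc hY.le (g := fun t =>
      ∑ i ∈ S, c i * (((t - B : ℝ) : ℂ) ^ ((ρ : ℂ) + Υ * i.2) / Gamma ((ρ : ℂ) + Υ * i.2 + 1)))]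
  · rw [riemannLiouvilleIntegral_finsetSum_mul_ofReal_sub_cpow_div_Gamma hμ hY S c _ hexp,
      cpow_mul_hermiteKonhauser _ _ _ _ _ hYB, sum_sigma']
    refine Finset.sum_congr rfl fun i _ => ?_
    rw [add_right_comm (ρ : ℂ)]
  · intro t ht
    dsimp only
    rw [cpow_mul_hermiteKonhauser _ _ _ _ _ (ofReal_ne_zero.2 (sub_pos.2 ht.1).ne'), sum_sigma']

/-- Riemann–Liouville fractional integral image of the 2D Hermite–Konhauser polynomial:
`I^μ_{B+}[(Y-B)^ρ ₖH_n^ρ(X, w(Y-B))] = (Y-B)^{ρ+μ} ₖH_n^{ρ+μ}(X, w(Y-B))`. -/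
theorem riemannLiouville_integral_hermiteKonhauser (ρ : ℝ) (hρ : -1 < ρ) (μ : ℂ)
    (hμ : 0 < μ.re) (Υ n : ℕ) (hΥ : 0 < Υ) (X w : ℂ) (B Y : ℝ) (hY : B < Y) :
    (1 / Complex.Gamma μ) *
        (∫ t in B..Y, ((Y - t : ℝ) : ℂ) ^ (μ - 1) *
          (((t - B : ℝ) : ℂ) ^ (ρ : ℂ) * hermiteKonhauser (ρ : ℂ) Υ n X (w * ((t : ℂ) - B)))) =
      ((Y - B : ℝ) : ℂ) ^ ((ρ : ℂ) + μ) *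
        hermiteKonhauser ((ρ : ℂ) + μ) Υ n X (w * ((Y : ℂ) - B)) :=
  riemannLiouville_integral_hermiteKonhauser_general ρ hρ μ hμ Υ n X w B Y hY
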